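/- Let q be a power of 2, let m ≥ 2 be an even integer, and let f be a non-degenerate quadratic form on F_{q^m} over F_q of Type I. Then there exists an (m−1)-dimensional F_q-subspace W of F_{q^m} such that the restriction of f to W has rank m−1 (and hence is of Type III); consequently, for every a ∈ F_q with a ≠ 0, |{x ∈ W : f(x) = a}| = q^{m−2}. -/

import Mathlib

noncomputable def qfKer {K V : Type*} [Field K] [AddCommGroup V] [Module K V]
    (f : QuadraticForm K V) : Submodule K V where
  carrier := {x | ∀ y, f (x + y) = f y}
  zero_mem' := by intro y; rw [zero_add]
  add_mem' := by
    intro a b ha hb y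
    rw [add_assoc, ha, hb]
  smul_mem' := by
    intro c x hx y
    have h0 : f x = 0 := by simpa using hx 0
    have hp : ∀ z, QuadraticMap.polar (⇑f) x z = 0 := by
      intro z
      simp [QuadraticMap.polar, hx z, h0]
    have h1 : f (c • x) = 0 := by
      rw [QuadraticMap.map_smul, h0]
      simp
    have hps : QuadraticMap.polar (⇑f) (c • x) y = 0 := by
      rw [QuadraticMap.polar_smul_left, hp y, smul_zero]
    have h2 : f (c • x + y) - f (c • x) - f y = 0 := hps
    show f (c • x + y) = f y
    linear_combination h2 + h1

/-- Extend a coordinate vector `c : Fin d → K` by zero to all of `ℕ`. -/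
def extc {K : Type*} [Zero K] {d : ℕ} (c : Fin d → K) (i : ℕ) : K :=
  if h : i < d then c ⟨i, h⟩ else 0

/-- A quadratic form of rank `t` on a `d`-dimensional space is of Type I if in some basis it is
`x₁x₂ + x₃x₄ + ⋯ + x_{t−1}x_t` (`t` even). -/
def IsTypeI (K V : Type*) [Field K] [AddCommGroup V] [Module K V] (d t : ℕ)
    (f : QuadraticForm K V) : Prop :=
  ∃ b : Module.Basis (Fin d) K V, ∀ c : Fin d → K,
    f (∑ i, c i • b i) =
      ∑ j ∈ Finset.range (t / 2), extc c (2 * j) * extc c (2 * j + 1)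

/-- A quadratic form of rank `t` on a `d`-dimensional space is of Type III if in some basis it is
`x₁x₂ + ⋯ + x_{t−2}x_{t−1} + x_t²` (`t` odd). -/
def IsTypeIII (K V : Type*) [Field K] [AddCommGroup V] [Module K V] (d t : ℕ)
    (f : QuadraticForm K V) : Prop :=
  ∃ b : Module.Basis (Fin d) K V, ∀ c : Fin d → K,
    f (∑ i, c i • b i) =
      (∑ j ∈ Finset.range (t / 2), extc c (2 * j) * extc c (2 * j + 1))
        + extc c (t - 1) ^ 2


/-!
In Type I coordinates `f = x₀x₁ + ⋯ + x_{2s}x_{2s+1}`. On the hyperplane `x_{2s} = x_{2s+1}` the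
last hyperbolic pair becomes the square `x_{2s}²`, so in the induced coordinates the restriction is
the parabolic form `x₀x₁ + ⋯ + x_{2s-2}x_{2s-1} + x_{2s}²`: it is of Type III, and testing the
kernel condition against coordinate vectors shows that its kernel is trivial. Squaring is a
bijection of a finite field of characteristic 2, so for each choice of `x₀, …, x_{2s-1}` exactly one
`x_{2s}` solves `f(x) = a`, which gives `q^{2s}` solutions.
-/

open Finset

section Extc

variable {K : Type*}

lemma extc_of_lt [Zero K] {d n : ℕ} (c : Fin d → K) (h : n < d) : extc c n = c ⟨n, h⟩ := dif_pos h

@[simp]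
lemma extc_last [Zero K] {n : ℕ} (c : Fin (n + 1) → K) : extc c n = c (Fin.last n) :=
  extc_of_lt c n.lt_succ_self

@[simp]
lemma extc_zero [Zero K] {d : ℕ} (n : ℕ) : extc (0 : Fin d → K) n = 0 := by
  unfold extc; split <;> rfl

lemma extc_add_single [AddZeroClass K] {d : ℕ} (c : Fin d → K) (i : Fin d) (t : K) (n : ℕ) :
    extc (c + Pi.single i t) n = extc c n + if n = i then t else 0 := by
  unfold extc
  split_ifs <;> simp_all [Fin.ext_iff]

lemma extc_snoc_of_lt [Zero K] {d n : ℕ} (c : Fin d → K) (v : K) (h : n < d) :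
    extc (Fin.snoc c v : Fin (d + 1) → K) n = extc c n := by
  rw [extc_of_lt _ (by omega), extc_of_lt c h]
  exact Fin.snoc_castSucc (α := fun _ => K) (i := ⟨n, h⟩) (p := c) (x := v)

end Extc

section PairSum

variable {K : Type*} [CommSemiring K]

def pairSum {d : ℕ} (n : ℕ) (c : Fin d → K) : K :=
  ∑ j ∈ range n, extc c (2 * j) * extc c (2 * j + 1)

lemma pairSum_snoc {d n : ℕ} (h : 2 * n ≤ d) (c : Fin d → K) (v : K) :
    pairSum n (Fin.snoc c v : Fin (d + 1) → K) = pairSum n c := by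
  refine sum_congr rfl fun j hj => ?_
  have := mem_range.mp hj
  rw [extc_snoc_of_lt c v (by omega), extc_snoc_of_lt c v (by omega)]

lemma pairSum_succ_snoc {n : ℕ} (c : Fin (2 * n + 1) → K) (v : K) :
    pairSum (n + 1) (Fin.snoc c v : Fin (2 * n + 2) → K) = pairSum n c + c (Fin.last _) * v := by
  rw [pairSum, sum_range_succ, ← pairSum, pairSum_snoc (by omega), extc_snoc_of_lt c v (by omega),
    extc_last, extc_of_lt _ (by omega)]
  congr
  exact Fin.snoc_last (α := fun _ => K) (p := c) (x := v)

lemma pairSum_add_single_even {d n j : ℕ} (hj : j < n) (hd : 2 * j + 1 < d) (c : Fin d → K)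
    (t : K) :
    pairSum n (c + Pi.single ⟨2 * j, by omega⟩ t) = pairSum n c + t * extc c (2 * j + 1) := by
  have hterm : ∀ k ∈ range n,
      extc (c + Pi.single ⟨2 * j, by omega⟩ t) (2 * k)
          * extc (c + Pi.single ⟨2 * j, by omega⟩ t) (2 * k + 1)
        = extc c (2 * k) * extc c (2 * k + 1) + if k = j then t * extc c (2 * j + 1) else 0 := by
    intro k _
    simp only [extc_add_single]
    split_ifs <;> first | omega | (subst_vars; ring)
  rw [pairSum, sum_congr rfl hterm, sum_add_distrib, sum_ite_eq', if_pos (mem_range.mpr hj),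
    pairSum]

lemma pairSum_add_single_odd {d n j : ℕ} (hj : j < n) (hd : 2 * j + 1 < d) (c : Fin d → K)
    (t : K) :
    pairSum n (c + Pi.single ⟨2 * j + 1, hd⟩ t) = pairSum n c + t * extc c (2 * j) := by
  have hterm : ∀ k ∈ range n,
      extc (c + Pi.single ⟨2 * j + 1, hd⟩ t) (2 * k)
          * extc (c + Pi.single ⟨2 * j + 1, hd⟩ t) (2 * k + 1)
        = extc c (2 * k) * extc c (2 * k + 1) + if k = j then t * extc c (2 * j) else 0 := by
    intro k _
    simp only [extc_add_single]
    split_ifs <;> first | omega | (subst_vars; ring)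
  rw [pairSum, sum_congr rfl hterm, sum_add_distrib, sum_ite_eq', if_pos (mem_range.mpr hj),
    pairSum]

end PairSum

section Parabolic

variable {K : Type*} [CommSemiring K]

def parabolicSum (s : ℕ) (c : Fin (2 * s + 1) → K) : K :=
  pairSum s c + c (Fin.last _) ^ 2

lemma parabolicSum_add_single_even {s j : ℕ} (hj : j < s) (c : Fin (2 * s + 1) → K) (t : K) :
    parabolicSum s (c + Pi.single ⟨2 * j, by omega⟩ t)
      = parabolicSum s c + t * extc c (2 * j + 1) := by
  rw [parabolicSum, pairSum_add_single_even hj (by omega), Pi.add_apply,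
    Pi.single_eq_of_ne (Fin.ne_of_val_ne (by dsimp; omega)), add_zero, parabolicSum]
  ring

lemma parabolicSum_add_single_odd {s j : ℕ} (hj : j < s) (c : Fin (2 * s + 1) → K) (t : K) :
    parabolicSum s (c + Pi.single ⟨2 * j + 1, by omega⟩ t)
      = parabolicSum s c + t * extc c (2 * j) := by
  rw [parabolicSum, pairSum_add_single_odd hj (by omega), Pi.add_apply,
    Pi.single_eq_of_ne (Fin.ne_of_val_ne (by dsimp; omega)), add_zero, parabolicSum]
  ring

@[simp]
lemma parabolicSum_zero (s : ℕ) : parabolicSum s (0 : Fin (2 * s + 1) → K) = 0 := by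
  simp [parabolicSum, pairSum]

lemma eq_zero_of_forall_parabolicSum_add [NoZeroDivisors K] {s : ℕ} {c : Fin (2 * s + 1) → K}
    (hc : ∀ d, parabolicSum s (c + d) = parabolicSum s d) : c = 0 := by
  have hc0 : parabolicSum s c = 0 := by simpa using hc 0
  have hpairs : ∀ j < s, extc c (2 * j) = 0 ∧ extc c (2 * j + 1) = 0 := by
    intro j hj
    have hodd := hc (Pi.single ⟨2 * j + 1, by omega⟩ 1)
    have heven := hc (Pi.single ⟨2 * j, by omega⟩ 1)
    rw [parabolicSum_add_single_odd hj, hc0, ← zero_add (Pi.single _ _),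
      parabolicSum_add_single_odd hj] at hodd
    rw [parabolicSum_add_single_even hj, hc0, ← zero_add (Pi.single _ _),
      parabolicSum_add_single_even hj] at heven
    exact ⟨by simpa using hodd, by simpa using heven⟩
  funext i
  rcases Fin.eq_castSucc_or_eq_last i with ⟨i, rfl⟩ | rfl
  · have hi : c i.castSucc = extc c i := (extc_of_lt c (by omega)).symm
    obtain ⟨j, hj | hj⟩ := Nat.even_or_odd' i <;> rw [Pi.zero_apply, hi, hj]
    · exact (hpairs j (by omega)).1
    · exact (hpairs j (by omega)).2
  · have hsum : pairSum s c = 0 :=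
      sum_eq_zero fun j hj => by rw [(hpairs j (mem_range.mp hj)).1, zero_mul]
    rw [parabolicSum, hsum, zero_add] at hc0
    exact pow_eq_zero_iff two_ne_zero |>.mp hc0

end Parabolic

lemma Nat.card_graph_of_bijective {α β γ : Type*} {σ : β → γ} (hσ : Function.Bijective σ)
    (g : α → γ) :
    Nat.card {p : β × α // σ p.1 = g p.2} = Nat.card α := by
  let e := Equiv.ofBijective σ hσ
  refine Nat.card_congr
    { toFun := fun p => p.1.2
      invFun := fun u => ⟨(e.symm (g u), u), e.apply_symm_apply (g u)⟩
      left_inv := fun ⟨(v, u), h⟩ => by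
        ext
        · exact e.symm_apply_eq.mpr h.symm
        · rfl
      right_inv := fun _ => rfl }

lemma ncard_parabolicSum_eq {K : Type*} [CommRing K] (hsq : Function.Bijective fun x : K => x ^ 2)
    (s : ℕ) (a : K) :
    {c : Fin (2 * s + 1) → K | parabolicSum s c = a}.ncard = Nat.card K ^ (2 * s) := by
  have hcard : Nat.card K ^ (2 * s) = Nat.card (Fin (2 * s) → K) := by
    rw [Nat.card_fun, Nat.card_fin]
  rw [← Nat.card_coe_set_eq, hcard, ← Nat.card_graph_of_bijective hsq fun u => a - pairSum s u]
  refine Nat.card_congr ((Fin.snocEquiv fun _ => K).symm.subtypeEquiv fun c => ?_)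
  induction c using Fin.snocCases with
  | snoc u v => simp [parabolicSum, pairSum_snoc, eq_sub_iff_add_eq, add_comm]

section Forms

variable {K V : Type*} [Field K] [AddCommGroup V] [Module K V]

lemma isTypeIII_odd_iff {s : ℕ} {g : QuadraticForm K V} :
    IsTypeIII K V (2 * s + 1) (2 * s + 1) g ↔
      ∃ b : Module.Basis (Fin (2 * s + 1)) K V, ∀ c, g (b.equivFun.symm c) = parabolicSum s c := by
  rw [IsTypeIII, (by omega : (2 * s + 1) / 2 = s), Nat.add_sub_cancel]
  simp only [Module.Basis.equivFun_symm_apply, extc_last]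
  rfl

lemma IsTypeIII.qfKer_eq_bot {s : ℕ} {g : QuadraticForm K V}
    (h : IsTypeIII K V (2 * s + 1) (2 * s + 1) g) : qfKer g = ⊥ := by
  obtain ⟨b, hb⟩ := isTypeIII_odd_iff.mp h
  refine (Submodule.eq_bot_iff _).mpr fun x hx => ?_
  suffices b.equivFun x = 0 by simpa using this
  refine eq_zero_of_forall_parabolicSum_add fun d => ?_
  rw [← hb, ← hb, map_add, b.equivFun.symm_apply_apply]
  exact hx _

lemma isTypeIII_comp_range_subtype {s : ℕ} {f : QuadraticForm K V}
    {φ : (Fin (2 * s + 1) → K) →ₗ[K] V} (hφ : Function.Injective φ)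
    (hf : ∀ c, f (φ c) = parabolicSum s c) :
    IsTypeIII K (LinearMap.range φ) (2 * s + 1) (2 * s + 1) (f.comp (LinearMap.range φ).subtype) :=
  isTypeIII_odd_iff.mpr ⟨.ofEquivFun (LinearEquiv.ofInjective φ hφ).symm, fun c => by
    simpa [Module.Basis.equivFun_ofEquivFun] using hf c⟩

lemma IsTypeI.exists_injective_parabolic {s : ℕ} {f : QuadraticForm K V}
    (h : IsTypeI K V (2 * s + 2) (2 * s + 2) f) :
    ∃ φ : (Fin (2 * s + 1) → K) →ₗ[K] V, Function.Injective φ ∧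
      ∀ c, f (φ c) = parabolicSum s c := by
  obtain ⟨b, hb⟩ := h
  rw [(by omega : (2 * s + 2) / 2 = s + 1)] at hb
  let dup : Fin (2 * s + 2) → Fin (2 * s + 1) := Fin.lastCases (Fin.last _) id
  have hdup : ∀ c : Fin (2 * s + 1) → K, c ∘ dup = Fin.snoc c (c (Fin.last _)) := by
    intro c
    funext i
    induction i using Fin.lastCases <;> simp [dup]
  refine ⟨b.equivFun.symm.toLinearMap ∘ₗ LinearMap.funLeft K K dup,
    b.equivFun.symm.injective.comp (LinearMap.funLeft_injective_of_surjective _ _ _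
      fun i => ⟨i.castSucc, by simp [dup]⟩), fun c => ?_⟩
  calc f (b.equivFun.symm (c ∘ dup)) = pairSum (s + 1) (c ∘ dup) := by
        rw [Module.Basis.equivFun_symm_apply]; exact hb _
    _ = parabolicSum s c := by rw [hdup, pairSum_succ_snoc, parabolicSum, sq]

end Forms

theorem exists_hyperplane_typeIII_restriction_general (q m : ℕ) (hq : ∃ e : ℕ, 0 < e ∧ q = 2 ^ e) (hm : 2 ≤ m) (hme : Even m)
    (K L : Type) [Field K] [Fintype K] [Field L] [Algebra K L]
    (hcard : Fintype.card K = q)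
    (f : QuadraticForm K L)
    (hI : IsTypeI K L m m f) :
    ∃ W : Submodule K L, Module.finrank K ↥W = m - 1 ∧
      Module.finrank K ↥W - Module.finrank K ↥(qfKer (f.comp W.subtype)) = m - 1 ∧
      IsTypeIII K ↥W (Module.finrank K ↥W) (m - 1) (f.comp W.subtype) ∧
      ∀ a : K, a ≠ 0 →
        Set.ncard {x : L | x ∈ W ∧ f x = a} = q ^ (m - 2) := by
  obtain ⟨e, -, rfl⟩ := hq
  obtain ⟨s, rfl⟩ : ∃ s, m = 2 * s + 2 := ⟨m / 2 - 1, by obtain ⟨k, hk⟩ := hme; omega⟩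
  have : CharP K 2 := charP_of_card_eq_prime_pow hcard
  obtain ⟨φ, hφ, hf⟩ := hI.exists_injective_parabolic
  have hIII := isTypeIII_comp_range_subtype hφ hf
  have hdim : Module.finrank K (LinearMap.range φ) = 2 * s + 1 := by
    rw [LinearMap.finrank_range_of_inj hφ, Module.finrank_fin_fun]
  refine ⟨LinearMap.range φ, hdim, ?_, by rw [hdim]; exact hIII, fun a _ => ?_⟩
  · rw [hdim, hIII.qfKer_eq_bot, finrank_bot]
    rfl
  have hsolutions : {x | x ∈ LinearMap.range φ ∧ f x = a} = φ '' {c | parabolicSum s c = a} := by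
    ext x
    simp only [LinearMap.mem_range, Set.mem_ofPred_eq, Set.mem_image]
    constructor
    · rintro ⟨⟨c, rfl⟩, hx⟩
      exact ⟨c, (hf c).symm.trans hx, rfl⟩
    · rintro ⟨c, hc, rfl⟩
      exact ⟨⟨c, rfl⟩, (hf c).trans hc⟩
  rw [hsolutions, Set.ncard_image_of_injective _ hφ,
    ncard_parabolicSum_eq (bijective_frobenius K 2), Nat.card_eq_fintype_card, hcard]
  rfl

/-- For a non-degenerate Type I form `f` on `F_{q^m}` (`m ≥ 2` even), there is an
`(m−1)`-dimensional subspace on which `f` restricts to a form of rank `m−1` (hence Type III);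
on it the equation `f(x) = a` (`a ≠ 0`) has `q^(m−2)` solutions. -/
theorem exists_hyperplane_typeIII_restriction (q m : ℕ) (hq : ∃ e : ℕ, 0 < e ∧ q = 2 ^ e) (hm : 2 ≤ m) (hme : Even m)
    (K L : Type) [Field K] [Fintype K] [Field L] [Fintype L] [Algebra K L]
    (hcard : Fintype.card K = q) (hcardL : Fintype.card L = q ^ m)
    (hrank : Module.finrank K L = m)
    (f : QuadraticForm K L)
    (hnd : ∀ x : L, (∀ y, f (x + y) = f y) → x = 0)
    (hI : IsTypeI K L m m f) :
    ∃ W : Submodule K L, Module.finrank K ↥W = m - 1 ∧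
      Module.finrank K ↥W - Module.finrank K ↥(qfKer (f.comp W.subtype)) = m - 1 ∧
      IsTypeIII K ↥W (Module.finrank K ↥W) (m - 1) (f.comp W.subtype) ∧
      ∀ a : K, a ≠ 0 →
        Set.ncard {x : L | x ∈ W ∧ f x = a} = q ^ (m - 2) :=
  exists_hyperplane_typeIII_restriction_general q m hq hm hme K L hcard f hI
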